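/- Let G be a finite simple graph whose vertex set is the disjoint union of two nonempty cliques C1 and C2 and the set U of universal vertices of G, with |U| = 1. Then G has a 2-tuple dominating set and γ×2(G) = 3. -/

import Mathlib

open Set

/-- The closed neighborhood `N[v]` of a vertex `v`: `v` together with its neighbors. -/
def closedNbhd {V : Type*} (G : SimpleGraph V) (v : V) : Set V :=
  insert v {w | G.Adj v w}

/-- `D` is a `k`-tuple dominating set of `G`: every vertex has at least `k` members of `D`
in its closed neighborhood. -/
def IsKTupleDomSet {V : Type*} (G : SimpleGraph V) (k : ℕ) (D : Set V) : Prop :=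
  ∀ v : V, k ≤ (closedNbhd G v ∩ D).ncard

/-- `γ×k(G)`: the minimum cardinality of a `k`-tuple dominating set of `G`. -/
noncomputable def gammaTuple {V : Type*} (G : SimpleGraph V) (k : ℕ) : ℕ :=
  sInf {n | ∃ D : Set V, IsKTupleDomSet G k D ∧ D.ncard = n}

/-- A vertex is universal if its closed neighborhood is the whole vertex set. -/
def IsUniversalVertex {V : Type*} (G : SimpleGraph V) (u : V) : Prop :=
  closedNbhd G u = Set.univ

/-!
A `2`-tuple dominating set with at most two vertices would have to lie in every closed
neighborhood, so all its vertices would be universal; as there is only one universal vertex,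
`γ×2(G) ≥ 3`. Conversely, with `u` the universal vertex and `cᵢ ∈ Cᵢ`, the set `{c₁, c₂}`
dominates `G` because each `Cᵢ` is a clique, and adding the universal vertex `u` raises the
domination multiplicity of every vertex by one, so `{u, c₁, c₂}` is `2`-tuple dominating.
-/

section

variable {V : Type*} {G : SimpleGraph V}

theorem mem_closedNbhd_comm {u v : V} : u ∈ closedNbhd G v ↔ v ∈ closedNbhd G u := by
  simp only [closedNbhd, mem_insert_iff, mem_ofPred_eq, eq_comm, G.adj_comm]

theorem isUniversalVertex_iff {u : V} : IsUniversalVertex G u ↔ ∀ v, u ∈ closedNbhd G v := by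
  simp only [IsUniversalVertex, eq_univ_iff_forall, mem_closedNbhd_comm]

theorem SimpleGraph.IsClique.subset_closedNbhd {C : Set V} (hC : G.IsClique C) {c : V}
    (hc : c ∈ C) : C ⊆ closedNbhd G c := fun v hv =>
  (eq_or_ne c v).elim (fun h => .inl h.symm) fun h => .inr (hC hc hv h)

theorem isKTupleDomSet_one_iff [Finite V] {D : Set V} :
    IsKTupleDomSet G 1 D ↔ ∀ v, (closedNbhd G v ∩ D).Nonempty :=
  forall_congr' fun _ =>
    Nat.one_le_iff_ne_zero.trans (Nat.pos_iff_ne_zero.symm.trans ncard_pos)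

theorem IsKTupleDomSet.insert_universal [Finite V] {k : ℕ} {D : Set V}
    (hD : IsKTupleDomSet G k D) {u : V} (hu : IsUniversalVertex G u) (huD : u ∉ D) :
    IsKTupleDomSet G (k + 1) (insert u D) := by
  intro v
  rw [inter_insert_of_mem (isUniversalVertex_iff.mp hu v),
    ncard_insert_of_notMem fun h => huD h.2]
  exact Nat.succ_le_succ (hD v)

theorem IsKTupleDomSet.subset_universal [Finite V] {k : ℕ} {D : Set V}
    (hD : IsKTupleDomSet G k D) (hcard : D.ncard ≤ k) :
    D ⊆ {u | IsUniversalVertex G u} := by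
  intro a ha
  refine isUniversalVertex_iff.mpr fun v => ?_
  have hfull : closedNbhd G v ∩ D = D :=
    eq_of_subset_of_ncard_le inter_subset_right (hcard.trans (hD v)) (toFinite D)
  exact (hfull.symm ▸ ha : a ∈ closedNbhd G v ∩ D).1

theorem IsKTupleDomSet.lt_ncard [Finite V] [Nonempty V] {k : ℕ}
    (hU : {u | IsUniversalVertex G u}.ncard < k) {D : Set V} (hD : IsKTupleDomSet G k D) :
    k < D.ncard := by
  by_contra! hcard
  have hDU := ncard_le_ncard (hD.subset_universal hcard)
  have hkD : k ≤ D.ncard :=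
    (hD (Classical.arbitrary V)).trans (ncard_le_ncard inter_subset_right)
  omega

theorem gammaTuple_eq_of_isMin {k : ℕ} {D : Set V} (hD : IsKTupleDomSet G k D)
    (hmin : ∀ D', IsKTupleDomSet G k D' → D.ncard ≤ D'.ncard) :
    gammaTuple G k = D.ncard :=
  le_antisymm (Nat.sInf_le ⟨D, hD, rfl⟩) <|
    le_csInf ⟨_, D, hD, rfl⟩ fun _ ⟨D', hD', hn⟩ => hn ▸ hmin D' hD'

end

/-- if `V(G)` is the disjoint union of two nonempty cliques and the set `U` of
universal vertices of `G`, with `|U| = 1`, then `G` has a `2`-tuple dominating set and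
`γ×2(G) = 3`. -/
theorem stmt8 {V : Type*} [Fintype V] (G : SimpleGraph V) (C1 C2 U : Set V)
    (hd12 : Disjoint C1 C2) (hd1U : Disjoint C1 U) (hd2U : Disjoint C2 U)
    (hunion : C1 ∪ C2 ∪ U = Set.univ)
    (hne1 : C1.Nonempty) (hne2 : C2.Nonempty)
    (hcl1 : G.IsClique C1) (hcl2 : G.IsClique C2)
    (hU : U = {u : V | IsUniversalVertex G u})
    (hUcard : U.ncard = 1) :
    (∃ D : Set V, IsKTupleDomSet G 2 D) ∧ gammaTuple G 2 = 3 := by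
  obtain ⟨u, rfl⟩ := ncard_eq_one.mp hUcard
  obtain ⟨c1, hc1⟩ := hne1
  obtain ⟨c2, hc2⟩ := hne2
  have hu : IsUniversalVertex G u := hU.le rfl
  have hdom1 : IsKTupleDomSet G 1 {c1, c2} := isKTupleDomSet_one_iff.mpr fun v => by
    rcases hunion.ge (mem_univ v) with (hv | hv) | rfl
    · exact ⟨c1, hcl1.subset_closedNbhd hc1 hv |> mem_closedNbhd_comm.mp, .inl rfl⟩
    · exact ⟨c2, hcl2.subset_closedNbhd hc2 hv |> mem_closedNbhd_comm.mp, .inr rfl⟩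
    · exact ⟨c1, hu.symm ▸ mem_univ c1, .inl rfl⟩
  have hu1 : u ≠ c1 := fun h => disjoint_left.mp hd1U (h ▸ hc1) rfl
  have hu2 : u ≠ c2 := fun h => disjoint_left.mp hd2U (h ▸ hc2) rfl
  have hdom2 : IsKTupleDomSet G 2 {u, c1, c2} := hdom1.insert_universal hu (by simp [hu1, hu2])
  have hcard : ({u, c1, c2} : Set V).ncard = 3 := by
    rw [ncard_insert_of_notMem (by simp [hu1, hu2]),
      ncard_pair fun h => disjoint_left.mp hd12 hc1 (by rwa [h])]
  have hfew : {u | IsUniversalVertex G u}.ncard < 2 := by rw [← hU, hUcard]; norm_num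
  have : Nonempty V := ⟨u⟩
  exact ⟨⟨_, hdom2⟩, hcard ▸ gammaTuple_eq_of_isMin hdom2 fun D hD => hcard ▸ hD.lt_ncard hfew⟩
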